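/- arXiv:2511.02668 — 3 statements merged into one kernel-verified Lean document; each statement's English description precedes it below -/
import Mathlib

section
/- Let CZ = ⟨c, G, A, b⟩ be a constrained zonotope in ℝⁿ and H = {x : hᵀx ≤ ζ} a halfspace. Define d_m = ζ − hᵀc + Σᵢ |hᵀgᵢ| (sum over columns gᵢ of G), and assume d_m ≥ 0. Then the intersection CZ ∩ H equals the constrained zonotope ⟨c, [G 0], Ã, b̃⟩ with one extra generator, where Ã = [[A, 0], [hᵀG, d_m/2]] and b̃ = [b; ζ − hᵀc − d_m/2]. -/
open Matrix

/-! For `α` in the unit box, `hᵀGα ≥ -Σᵢ |hᵀgᵢ|`, so the slack `ζ − hᵀc − hᵀGα` of the halfspace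
constraint never exceeds `d_m`. The new generator `β ∈ [-1, 1]` parametrises exactly the slacks
in `[0, d_m]`, as `(d_m / 2)(1 + β)`; hence it adds the halfspace constraint and nothing else. -/

theorem neg_sum_abs_le_dotProduct {ι R : Type*} [Fintype ι] [CommRing R] [LinearOrder R]
    [IsStrictOrderedRing R] (w : ι → R) {α : ι → R} (hα : ∀ i, |α i| ≤ 1) :
    -∑ i, |w i| ≤ w ⬝ᵥ α := by
  refine neg_le_of_abs_le ((Finset.abs_sum_le_sum_abs _ _).trans (Finset.sum_le_sum fun i _ => ?_))
  calc |w i * α i| = |w i| * |α i| := abs_mul _ _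
    _ ≤ |w i| * 1 := mul_le_mul_of_nonneg_left (hα i) (abs_nonneg _)
    _ = |w i| := mul_one _

theorem exists_abs_le_one_half_mul_eq_sub_iff {K : Type*} [Field K] [LinearOrder K]
    [IsStrictOrderedRing K] {d r : K} (hd : 0 ≤ d) :
    (∃ β, |β| ≤ 1 ∧ d / 2 * β = r - d / 2) ↔ 0 ≤ r ∧ r ≤ d := by
  constructor
  · rintro ⟨β, hβ, hβr⟩
    obtain ⟨hβ₁, hβ₂⟩ := abs_le.mp hβ
    constructor <;> nlinarith
  · rintro ⟨hr₀, hrd⟩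
    rcases hd.eq_or_lt with rfl | hd₀
    · exact ⟨0, by simp, by simp [le_antisymm hrd hr₀]⟩
    refine ⟨2 * r / d - 1, abs_le.mpr ⟨?_, ?_⟩, by field_simp⟩
    · have : 0 ≤ 2 * r / d := by positivity
      linarith
    · have : 2 * r / d ≤ 2 := by rw [div_le_iff₀ hd₀]; linarith
      linarith

/-- Halfspace intersection of a constrained zonotope (Scott et al.): with
`d_m = ζ − hᵀc + Σᵢ |hᵀgᵢ| ≥ 0`, the intersection `CZ ∩ {x : hᵀx ≤ ζ}` equals
the constrained zonotope with one extra generator and the appended constraint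
`hᵀGα + (d_m/2)β = ζ − hᵀc − d_m/2`. -/
theorem conZono_halfspace_inter {n ng m : ℕ} (c : Fin n → ℝ)
    (G : Matrix (Fin n) (Fin ng) ℝ) (A : Matrix (Fin m) (Fin ng) ℝ) (b : Fin m → ℝ)
    (h : Fin n → ℝ) (ζ : ℝ) (dm : ℝ)
    (hdm : dm = ζ - h ⬝ᵥ c + ∑ i, |Matrix.vecMul h G i|)
    (hpos : 0 ≤ dm)
    (CZ : Set (Fin n → ℝ))
    (hCZ : CZ = {x | ∃ α : Fin ng → ℝ, (∀ i, |α i| ≤ 1) ∧ A.mulVec α = b ∧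
      x = c + G.mulVec α}) :
    CZ ∩ {x | h ⬝ᵥ x ≤ ζ} =
      {x | ∃ (α : Fin ng → ℝ) (β : ℝ), (∀ i, |α i| ≤ 1) ∧ |β| ≤ 1 ∧
        A.mulVec α = b ∧
        h ⬝ᵥ G.mulVec α + (dm / 2) * β = ζ - h ⬝ᵥ c - dm / 2 ∧
        x = c + G.mulVec α} := by
  subst hCZ
  ext x
  simp only [Set.mem_inter_iff, Set.mem_ofPred_eq]
  constructor
  · rintro ⟨⟨α, hα, hAb, rfl⟩, hx⟩
    have hlb := neg_sum_abs_le_dotProduct (vecMul h G) hα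
    rw [← dotProduct_mulVec] at hlb
    rw [dotProduct_add] at hx
    obtain ⟨β, hβ, hβeq⟩ := (exists_abs_le_one_half_mul_eq_sub_iff
      (r := ζ - h ⬝ᵥ c - h ⬝ᵥ G *ᵥ α) hpos).mpr ⟨by linarith, by linarith⟩
    exact ⟨α, β, hα, hβ, hAb, by linarith, rfl⟩
  · rintro ⟨α, β, hα, hβ, hAb, hβeq, rfl⟩
    have hslack := ((exists_abs_le_one_half_mul_eq_sub_iff
      (r := ζ - h ⬝ᵥ c - h ⬝ᵥ G *ᵥ α) hpos).mp ⟨β, hβ, by linarith⟩).1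
    exact ⟨⟨α, hα, hAb, rfl⟩, by rw [dotProduct_add]; linarith⟩
end

section
/- In the halfspace intersection formula for constrained zonotopes, the new internal factor β is uniquely determined by α: for any α ∈ [-1,1]^{n_g} with Aα = b and hᵀ(c + Gα) ≤ ζ, setting β = (ζ − hᵀc − d_m/2 − hᵀGα)/(d_m/2) (assuming d_m > 0) gives β ∈ [-1,1] and satisfies the appended constraint row hᵀGα + (d_m/2)β = ζ − hᵀc − d_m/2. -/
/-!
Since `|αᵢ| ≤ 1`, the value `hᵀGα` lies in `[-∑ᵢ |hᵀgᵢ|, ζ - hᵀc]`, an interval of length `d_m`;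
`β` is the affine map sending this interval onto `[-1, 1]`, and the constraint row just undoes
the rescaling.
-/

open Matrix

theorem abs_dotProduct_le_sum_abs_of_abs_le_one {ι R : Type*} [Fintype ι] [Ring R]
    [LinearOrder R] [IsOrderedRing R] (v α : ι → R) (hα : ∀ i, |α i| ≤ 1) :
    |v ⬝ᵥ α| ≤ ∑ i, |v i| :=
  calc |v ⬝ᵥ α| ≤ ∑ i, |v i * α i| := Finset.abs_sum_le_sum_abs _ _
    _ ≤ ∑ i, |v i| := Finset.sum_le_sum fun i _ => by
        rw [abs_mul]
        exact mul_le_of_le_one_right (abs_nonneg _) (hα i)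

/-- For `lo = hi` the division by zero returns `0`. -/
theorem abs_sub_div_half_width_le_one_of_mem_Icc {K : Type*} [Field K] [LinearOrder K]
    [IsStrictOrderedRing K] {lo hi s : K} (hs : s ∈ Set.Icc lo hi) :
    |(hi - (hi - lo) / 2 - s) / ((hi - lo) / 2)| ≤ 1 := by
  obtain ⟨hlo, hhi⟩ := hs
  rw [abs_div]
  refine div_le_one_of_le₀ ?_ (abs_nonneg _)
  rw [abs_of_nonneg (by linarith : 0 ≤ (hi - lo) / 2), abs_le]
  constructor <;> linarith

theorem conZono_halfspace_beta_general {n ng : ℕ} (c : Fin n → ℝ)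
    (G : Matrix (Fin n) (Fin ng) ℝ)
    (h : Fin n → ℝ) (ζ : ℝ) (dm : ℝ)
    (hdm : dm = ζ - h ⬝ᵥ c + ∑ i, |Matrix.vecMul h G i|)
    (hpos : 0 < dm)
    (α : Fin ng → ℝ) (hα : ∀ i, |α i| ≤ 1)
    (hin : h ⬝ᵥ (c + G.mulVec α) ≤ ζ)
    (β : ℝ) (hβ : β = (ζ - h ⬝ᵥ c - dm / 2 - h ⬝ᵥ G.mulVec α) / (dm / 2)) :
    |β| ≤ 1 ∧ h ⬝ᵥ G.mulVec α + (dm / 2) * β = ζ - h ⬝ᵥ c - dm / 2 := by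
  have hmem : h ⬝ᵥ G *ᵥ α ∈ Set.Icc (-∑ i, |vecMul h G i|) (ζ - h ⬝ᵥ c) := by
    constructor
    · rw [dotProduct_mulVec]
      exact (abs_le.mp (abs_dotProduct_le_sum_abs_of_abs_le_one _ α hα)).1
    · rw [dotProduct_add] at hin
      linarith
  constructor
  · have hwidth : dm = ζ - h ⬝ᵥ c - -∑ i, |vecMul h G i| := by rw [hdm, sub_neg_eq_add]
    rw [hβ, hwidth]
    exact abs_sub_div_half_width_le_one_of_mem_Icc hmem
  · rw [hβ, mul_div_cancel₀ _ (by positivity)]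
    ring

/-- In the halfspace intersection formula for constrained zonotopes, the new
internal factor `β` is determined by `α`: for `α ∈ [-1,1]^{n_g}` with
`Aα = b` and `hᵀ(c + Gα) ≤ ζ`, setting
`β = (ζ − hᵀc − d_m/2 − hᵀGα)/(d_m/2)` (with `d_m > 0`) gives `β ∈ [-1,1]`
and `hᵀGα + (d_m/2)β = ζ − hᵀc − d_m/2`. -/
theorem conZono_halfspace_beta {n ng m : ℕ} (c : Fin n → ℝ)
    (G : Matrix (Fin n) (Fin ng) ℝ) (A : Matrix (Fin m) (Fin ng) ℝ) (b : Fin m → ℝ)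
    (h : Fin n → ℝ) (ζ : ℝ) (dm : ℝ)
    (hdm : dm = ζ - h ⬝ᵥ c + ∑ i, |Matrix.vecMul h G i|)
    (hpos : 0 < dm)
    (α : Fin ng → ℝ) (hα : ∀ i, |α i| ≤ 1) (hAb : A.mulVec α = b)
    (hin : h ⬝ᵥ (c + G.mulVec α) ≤ ζ)
    (β : ℝ) (hβ : β = (ζ - h ⬝ᵥ c - dm / 2 - h ⬝ᵥ G.mulVec α) / (dm / 2)) :
    |β| ≤ 1 ∧ h ⬝ᵥ G.mulVec α + (dm / 2) * β = ζ - h ⬝ᵥ c - dm / 2 :=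
  conZono_halfspace_beta_general c G h ζ dm hdm hpos α hα hin β hβ
end

section
/- For any bounded polytope P = {x ∈ ℝⁿ : Ax ≤ b} with nonempty interior, there exists a constrained zonotope ⟨c, G, Ā, b̄⟩ equal to P, obtained by taking an axis-aligned bounding box of P as the initial zonotope and intersecting with each of the m defining halfspaces; the resulting representation has n + m generators and m constraints. -/
open Matrix

/-- Any bounded polytope `P = {x : Ax ≤ b}` with nonempty interior can be
represented exactly as a constrained zonotope `⟨c, G, Ā, b̄⟩` with `n + m`
generators and `m` constraints, obtained by taking an axis-aligned bounding
box of `P` as the initial zonotope and intersecting with the `m` defining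
halfspaces. -/
theorem polytope_as_conZono {n m : ℕ} (A : Matrix (Fin m) (Fin n) ℝ)
    (b : Fin m → ℝ) (P : Set (Fin n → ℝ))
    (hP : P = {x | ∀ i, A.mulVec x i ≤ b i})
    (hbdd : Bornology.IsBounded P)
    (hint : (interior P).Nonempty) :
    ∃ (c : Fin n → ℝ) (G : Matrix (Fin n) (Fin (n + m)) ℝ)
      (Abar : Matrix (Fin m) (Fin (n + m)) ℝ) (bbar : Fin m → ℝ),
      P = {x | ∃ α : Fin (n + m) → ℝ, (∀ i, |α i| ≤ 1) ∧
        Abar.mulVec α = bbar ∧ x = c + G.mulVec α} := by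
  obtain ⟨r, hr⟩ := hbdd.subset_closedBall 0
  set R : ℝ := max r 1 with hRdef
  have hR1 : (1:ℝ) ≤ R := le_max_right r 1
  have hR0 : (0:ℝ) < R := lt_of_lt_of_le one_pos hR1
  have hxR : ∀ x ∈ P, ∀ j, |x j| ≤ R := by
    intro x hx j
    have h1 : ‖x‖ ≤ r := by
      have := hr hx
      simpa [Metric.mem_closedBall] using this
    calc |x j| = ‖x j‖ := (Real.norm_eq_abs _).symm
      _ ≤ ‖x‖ := norm_le_pi_norm x j
      _ ≤ r := h1
      _ ≤ R := le_max_left r 1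
  set d : Fin m → ℝ := fun i => |b i| + R * ∑ j, |A i j| + 1 with hddef
  have hd0 : ∀ i, 0 < d i := by
    intro i
    have h : 0 ≤ |b i| + R * ∑ j, |A i j| := by positivity
    simp only [hddef]; linarith
  have hdub : ∀ x ∈ P, ∀ i, b i - A.mulVec x i ≤ d i := by
    intro x hx i
    have h1 : -(R * ∑ j, |A i j|) ≤ A.mulVec x i := by
      rw [Matrix.mulVec, dotProduct]
      rw [neg_le]
      calc -(∑ j, A i j * x j) = ∑ j, -(A i j * x j) := by rw [Finset.sum_neg_distrib]
        _ ≤ ∑ j, R * |A i j| := by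
            apply Finset.sum_le_sum
            intro j _
            have h2 : -(A i j * x j) ≤ |A i j * x j| := neg_le_abs _
            have h3 : |A i j * x j| = |A i j| * |x j| := abs_mul _ _
            have h4 : |A i j| * |x j| ≤ |A i j| * R :=
              mul_le_mul_of_nonneg_left (hxR x hx j) (abs_nonneg _)
            nlinarith
        _ = R * ∑ j, |A i j| := by rw [Finset.mul_sum]
    have h2 : b i ≤ |b i| := le_abs_self _
    simp only [hddef]; linarith
  refine ⟨fun _ => 0,
    Matrix.of fun j k => Fin.addCases (fun j' : Fin n => if j = j' then R else 0)
      (fun _ : Fin m => (0:ℝ)) k,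
    Matrix.of fun i k => Fin.addCases (fun j' : Fin n => R * A i j')
      (fun i' : Fin m => if i = i' then d i / 2 else 0) k,
    fun i => b i - d i / 2, ?_⟩
  ext x
  simp only [Set.mem_setOf_eq]
  constructor
  · intro hx
    have hxP := hx
    rw [hP] at hxP
    refine ⟨Fin.addCases (fun j => x j / R)
      (fun i => (b i - A.mulVec x i) * 2 / d i - 1), ?_, ?_, ?_⟩
    · intro k
      refine Fin.addCases ?_ ?_ k
      · intro j
        simp only [Fin.addCases_left]
        rw [abs_div, abs_of_pos hR0, div_le_one hR0]
        exact hxR x hx j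
      · intro i
        simp only [Fin.addCases_right]
        have h1 : 0 ≤ b i - A.mulVec x i := by
          have := hxP i; linarith [this]
        have h2 : b i - A.mulVec x i ≤ d i := hdub x hx i
        have h3 : (b i - A.mulVec x i) * 2 / d i ≤ 2 := by
          rw [div_le_iff₀ (hd0 i)]; linarith
        have h4 : 0 ≤ (b i - A.mulVec x i) * 2 / d i := by positivity
        rw [abs_le]; constructor <;> linarith
    · funext i
      rw [Matrix.mulVec, dotProduct, Fin.sum_univ_add]
      simp only [Matrix.of_apply, Fin.addCases_left, Fin.addCases_right]
      have hA : A.mulVec x i = ∑ j, A i j * x j := rfl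
      have hsum1 : ∑ j : Fin n, R * A i j * (x j / R) = A.mulVec x i := by
        rw [hA]
        apply Finset.sum_congr rfl
        intro j _
        field_simp
      have hsum2 : ∑ i' : Fin m,
          (if i = i' then d i / 2 else 0) * ((b i' - A.mulVec x i') * 2 / d i' - 1)
          = d i / 2 * ((b i - A.mulVec x i) * 2 / d i - 1) := by
        rw [Finset.sum_eq_single i]
        · simp
        · intro j _ hj; simp [Ne.symm hj]
        · simp
      rw [hsum1, hsum2]
      have hdne : d i ≠ 0 := ne_of_gt (hd0 i)
      field_simp
      ring
    · funext j
      simp only [Pi.add_apply]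
      rw [Matrix.mulVec, dotProduct, Fin.sum_univ_add]
      simp only [Matrix.of_apply, Fin.addCases_left, Fin.addCases_right]
      have h1 : ∑ j' : Fin n, (if j = j' then R else 0) * (x j' / R) = R * (x j / R) := by
        rw [Finset.sum_eq_single j]
        · simp
        · intro j' _ hj'; simp [Ne.symm hj']
        · simp
      rw [h1]
      have hc : R * (x j / R) = x j := by field_simp
      simp [hc]
  · rintro ⟨α, hα, hcon, hxeq⟩
    rw [hP]
    intro i
    have hxj : ∀ j, x j = R * α (Fin.castAdd m j) := by
      intro j
      rw [hxeq]
      simp only [Pi.add_apply]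
      rw [Matrix.mulVec, dotProduct, Fin.sum_univ_add]
      simp only [Matrix.of_apply, Fin.addCases_left, Fin.addCases_right]
      rw [Finset.sum_eq_single j]
      · simp
      · intro j' _ hj'; simp [Ne.symm hj']
      · simp
    have hcon_i := congrFun hcon i
    rw [Matrix.mulVec, dotProduct, Fin.sum_univ_add] at hcon_i
    simp only [Matrix.of_apply, Fin.addCases_left, Fin.addCases_right] at hcon_i
    have hsum2 : ∑ i' : Fin m, (if i = i' then d i / 2 else 0) * α (Fin.natAdd n i')
        = d i / 2 * α (Fin.natAdd n i) := by
      rw [Finset.sum_eq_single i]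
      · simp
      · intro j _ hj; simp [Ne.symm hj]
      · simp
    rw [hsum2] at hcon_i
    have hA : A.mulVec x i = ∑ j : Fin n, R * A i j * α (Fin.castAdd m j) := by
      rw [Matrix.mulVec, dotProduct]
      apply Finset.sum_congr rfl
      intro j _
      rw [hxj j]; ring
    have hγ : -1 ≤ α (Fin.natAdd n i) := (abs_le.mp (hα _)).1
    have hdi := hd0 i
    have key : d i / 2 * (-1) ≤ d i / 2 * α (Fin.natAdd n i) :=
      mul_le_mul_of_nonneg_left hγ (by positivity)
    linarith [hcon_i, hA, key]
end
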